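/- arXiv:2101.09636 — 2 statements merged into one kernel-verified Lean document; each statement's English description precedes it below -/
import Mathlib

section
/- The primary module W_0 is an irreducible T-module if and only if S is a p'-valenced scheme, that is, p does not divide any valency k_i. -/
open Matrix

/-- An association scheme of class `d` on a finite set `X`: every pair is assigned a
relation index `r x y ∈ [0,d]`, relation `0` is the diagonal, there is a transpose
involution `inv`, each relation is attained, and the intersection numbers
`p i j ℓ = |{z : (x,z) ∈ R_i, (z,y) ∈ R_j}|` depend only on `ℓ = r x y`. -/
structure AssocScheme (X : Type*) [Fintype X] [DecidableEq X] (d : ℕ) where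
  r : X → X → Fin (d + 1)
  r_diag : ∀ x y : X, r x y = 0 ↔ x = y
  inv : Fin (d + 1) → Fin (d + 1)
  r_symm : ∀ x y : X, r y x = inv (r x y)
  p : Fin (d + 1) → Fin (d + 1) → Fin (d + 1) → ℕ
  card_p : ∀ (i j : Fin (d + 1)) (x y : X),
    (Finset.univ.filter fun z : X => r x z = i ∧ r z y = j).card = p i j (r x y)
  surj : ∀ i : Fin (d + 1), ∃ x y : X, r x y = i

namespace AssocScheme

variable {X : Type*} [Fintype X] [DecidableEq X] {d : ℕ}

/-- The valency `k_i = p_{i i'}^0` of the relation `R_i`. -/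
def k (S : AssocScheme X d) (i : Fin (d + 1)) : ℕ := S.p i (S.inv i) 0

variable (F : Type*) [Field F]

/-- The adjacency matrix of the relation `R_j` over `F`. -/
def adjM (S : AssocScheme X d) (j : Fin (d + 1)) : Matrix X X F :=
  Matrix.of fun y z => if S.r y z = j then 1 else 0

/-- The dual idempotent `E_i^*` with respect to the base point `x`. -/
def dualIdem (S : AssocScheme X d) (x : X) (i : Fin (d + 1)) : Matrix X X F :=
  Matrix.of fun y z => if y = z ∧ S.r x y = i then 1 else 0

/-- The all-one matrix `J`. -/
def Jmat : Matrix X X F := Matrix.of fun _ _ => 1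

/-- The (modular) Terwilliger algebra of `S` with respect to `x`. -/
def terw (S : AssocScheme X d) (x : X) : Subalgebra F (Matrix X X F) :=
  Algebra.adjoin F (Set.range (S.adjM F) ∪ Set.range (S.dualIdem F x))

/-- The primary module `W_0 = span_F {E_i^* 𝟏 : i ∈ [0,d]}`. -/
def W0 (S : AssocScheme X d) (x : X) : Submodule F (X → F) :=
  Submodule.span F (Set.range fun i : Fin (d + 1) => S.dualIdem F x i *ᵥ (1 : X → F))



section Aux
variable {F}

lemma r_self (S : AssocScheme X d) (x : X) : S.r x x = 0 := (S.r_diag x x).mpr rfl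

lemma inv_inv (S : AssocScheme X d) (i : Fin (d + 1)) : S.inv (S.inv i) = i := by
  obtain ⟨a, b, h⟩ := S.surj i
  have h1 := S.r_symm a b
  have h2 := S.r_symm b a
  rw [h] at h1; rw [h1] at h2; rw [← h2]; exact h

lemma r_comm_iff (S : AssocScheme X d) {y z : X} {j : Fin (d + 1)} :
    S.r y z = j ↔ S.r z y = S.inv j := by
  constructor
  · intro h; rw [S.r_symm y z, h]
  · intro h
    have := S.r_symm z y
    rw [h] at this
    rw [this, inv_inv]

lemma inv_zero (S : AssocScheme X d) : S.inv 0 = 0 := by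
  obtain ⟨a, _, _⟩ := S.surj 0
  have := S.r_symm a a
  rw [r_self] at this
  exact this.symm

def sph (S : AssocScheme X d) (x : X) (i : Fin (d + 1)) : Finset X :=
  Finset.univ.filter fun z => S.r x z = i

lemma card_sph (S : AssocScheme X d) (x : X) (i : Fin (d + 1)) :
    (S.sph x i).card = S.k i := by
  have h := S.card_p i (S.inv i) x x
  rw [r_self] at h
  rw [k, ← h]
  congr 1
  ext z
  simp only [sph, Finset.mem_filter, Finset.mem_univ, true_and]
  exact ⟨fun hz => ⟨hz, S.r_comm_iff.mp hz⟩, fun hz => hz.1⟩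

lemma k_pos (S : AssocScheme X d) (i : Fin (d + 1)) : 0 < S.k i := by
  obtain ⟨a, b, h⟩ := S.surj i
  rw [← card_sph S a i]
  exact Finset.card_pos.mpr ⟨b, by simp [sph, h]⟩

lemma exists_r (S : AssocScheme X d) (x : X) (i : Fin (d + 1)) : ∃ y, S.r x y = i := by
  have := S.k_pos i
  rw [← card_sph S x i] at this
  obtain ⟨y, hy⟩ := Finset.card_pos.mp this
  exact ⟨y, (Finset.mem_filter.mp hy).2⟩

/-- indicator vector of the sphere -/
def e (S : AssocScheme X d) (F : Type*) [Field F] (x : X) (i : Fin (d + 1)) : X → F :=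
  S.dualIdem F x i *ᵥ (1 : X → F)

lemma e_apply (S : AssocScheme X d) (x : X) (i : Fin (d + 1)) (y : X) :
    S.e F x i y = if S.r x y = i then 1 else 0 := by
  simp only [e, dualIdem, Matrix.mulVec, dotProduct, Matrix.of_apply, Pi.one_apply, mul_one]
  by_cases h : S.r x y = i
  · simp [h, Finset.sum_ite_eq]
  · simp [h]

lemma dualIdem_mulVec (S : AssocScheme X d) (x : X) (j : Fin (d + 1)) (v : X → F) :
    S.dualIdem F x j *ᵥ v = fun y => if S.r x y = j then v y else 0 := by
  funext y
  simp only [Matrix.mulVec, dualIdem, dotProduct, Matrix.of_apply]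
  by_cases h : S.r x y = j
  · simp [h, Finset.sum_ite_eq]
  · simp [h]

lemma adjM_mulVec_e (S : AssocScheme X d) (x : X) (j i : Fin (d + 1)) :
    S.adjM F j *ᵥ S.e F x i = fun y => ((S.p i (S.inv j) (S.r x y) : ℕ) : F) := by
  funext y
  simp only [Matrix.mulVec, adjM, dotProduct, Matrix.of_apply, e_apply]
  rw [← S.card_p i (S.inv j) x y]
  rw [← Finset.sum_boole]
  apply Finset.sum_congr rfl
  intro z _
  by_cases h1 : S.r x z = i <;> by_cases h2 : S.r y z = j
  · rw [if_pos h2, if_pos h1, if_pos ⟨h1, S.r_comm_iff.mp h2⟩, one_mul]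
  · rw [if_neg h2, if_pos h1, zero_mul, if_neg]
    rintro ⟨-, hz⟩
    exact h2 (S.r_comm_iff.mpr hz)
  · simp [h1, h2]
  · simp [h1, h2]

lemma adjM_mulVec_e_sum (S : AssocScheme X d) (x : X) (j i : Fin (d + 1)) :
    S.adjM F j *ᵥ S.e F x i = ∑ m, ((S.p i (S.inv j) m : ℕ) : F) • S.e F x m := by
  rw [adjM_mulVec_e]
  funext y
  simp only [Finset.sum_apply, Pi.smul_apply, e_apply, smul_eq_mul]
  rw [Finset.sum_congr rfl (fun m _ => by
    rw [show (((S.p i (S.inv j) m : ℕ) : F) * if S.r x y = m then 1 else 0)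
        = if S.r x y = m then ((S.p i (S.inv j) m : ℕ) : F) else 0 by
      by_cases h : S.r x y = m <;> simp [h]])]
  rw [Finset.sum_ite_eq Finset.univ (S.r x y) (fun m => ((S.p i (S.inv j) m : ℕ) : F))]
  simp

lemma dualIdem_mulVec_e (S : AssocScheme X d) (x : X) (j i : Fin (d + 1)) :
    S.dualIdem F x j *ᵥ S.e F x i = if j = i then S.e F x i else 0 := by
  rw [dualIdem_mulVec]
  by_cases h : j = i
  · subst h
    rw [if_pos rfl]
    funext y
    by_cases hy : S.r x y = j <;> simp [e_apply, hy]
  · rw [if_neg h]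
    funext y
    show (if S.r x y = j then S.e F x i y else 0) = 0
    by_cases hy : S.r x y = j
    · rw [if_pos hy, e_apply, if_neg (fun h' => h (hy.symm.trans h'))]
    · rw [if_neg hy]

lemma sum_p (S : AssocScheme X d) (i ℓ : Fin (d + 1)) :
    ∑ j, S.p i (S.inv j) ℓ = S.k i := by
  obtain ⟨x, _, _⟩ := S.surj 0
  obtain ⟨y, hy⟩ := S.exists_r x ℓ
  have h1 : ∀ j, S.p i (S.inv j) ℓ
      = (Finset.univ.filter fun z : X => S.r x z = i ∧ S.r z y = S.inv j).card := by
    intro j; rw [S.card_p i (S.inv j) x y, hy]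
  simp only [h1]
  rw [Fintype.sum_equiv (Equiv.ofBijective S.inv
    (Function.Involutive.bijective (fun a => S.inv_inv a)))
    (fun j => (Finset.univ.filter fun z : X => S.r x z = i ∧ S.r z y = S.inv j).card)
    (fun j => (Finset.univ.filter fun z : X => S.r x z = i ∧ S.r z y = j).card)
    (fun j => rfl)]
  rw [← card_sph S x i]
  rw [sph]
  rw [Finset.card_filter]
  simp only [Finset.card_filter]
  rw [Finset.sum_comm]
  apply Finset.sum_congr rfl
  intro z _
  by_cases h : S.r x z = i
  · simp [h, Finset.sum_ite_eq]
  · simp [h]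

lemma triple (S : AssocScheme X d) (i j ℓ : Fin (d + 1)) :
    S.k ℓ * S.p i j ℓ = S.k i * S.p ℓ (S.inv j) i := by
  obtain ⟨x, _, _⟩ := S.surj 0
  have key : ∑ y : X, ∑ z : X,
      (if S.r x y = ℓ ∧ S.r x z = i ∧ S.r z y = j then (1:ℕ) else 0)
      = S.k ℓ * S.p i j ℓ := by
    rw [← card_sph S x ℓ, Finset.card_eq_sum_ones (S.sph x ℓ), Finset.sum_mul]
    rw [sph, Finset.sum_filter]
    apply Finset.sum_congr rfl
    intro y _
    by_cases hy : S.r x y = ℓ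
    · rw [if_pos hy, one_mul, ← hy, ← S.card_p i j x y, Finset.card_filter]
      apply Finset.sum_congr rfl
      intro z _
      simp
    · rw [if_neg hy]
      exact Finset.sum_eq_zero fun z _ => if_neg (fun h => hy h.1)
  have key2 : ∑ z : X, ∑ y : X,
      (if S.r x y = ℓ ∧ S.r x z = i ∧ S.r z y = j then (1:ℕ) else 0)
      = S.k i * S.p ℓ (S.inv j) i := by
    rw [← card_sph S x i, Finset.card_eq_sum_ones (S.sph x i), Finset.sum_mul]
    rw [sph, Finset.sum_filter]
    apply Finset.sum_congr rfl
    intro z _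
    by_cases hz : S.r x z = i
    · rw [if_pos hz, one_mul, ← hz, ← S.card_p ℓ (S.inv j) x z, Finset.card_filter]
      apply Finset.sum_congr rfl
      intro y _
      by_cases hy : S.r x y = ℓ ∧ S.r y z = S.inv j
      · rw [if_pos ⟨hy.1, rfl, S.r_comm_iff.mpr hy.2⟩, if_pos hy]
      · rw [if_neg hy, if_neg]
        rintro ⟨h1, -, h3⟩
        exact hy ⟨h1, S.r_comm_iff.mp h3⟩
    · rw [if_neg hz]
      exact Finset.sum_eq_zero fun y _ => if_neg (fun h => hz h.2.1)
  rw [← key, ← key2, Finset.sum_comm]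

lemma e_ne_zero (S : AssocScheme X d) (x : X) (i : Fin (d + 1)) : S.e F x i ≠ 0 := by
  obtain ⟨y, hy⟩ := S.exists_r x i
  intro h
  have := congrFun h y
  rw [e_apply, if_pos hy] at this
  exact one_ne_zero this

lemma k_zero (S : AssocScheme X d) : S.k 0 = 1 := by
  obtain ⟨x, _, _⟩ := S.surj 0
  rw [← card_sph S x 0]
  rw [show S.sph x 0 = {x} from ?_]
  · simp
  · ext z
    simp [sph, S.r_diag, eq_comm]

lemma e_mem_W0 (S : AssocScheme X d) (x : X) (i : Fin (d + 1)) : S.e F x i ∈ S.W0 F x :=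
  Submodule.subset_span ⟨i, rfl⟩

lemma adjM_mem_terw (S : AssocScheme X d) (x : X) (j : Fin (d + 1)) :
    S.adjM F j ∈ S.terw F x :=
  Algebra.subset_adjoin (Or.inl ⟨j, rfl⟩)

lemma dualIdem_mem_terw (S : AssocScheme X d) (x : X) (j : Fin (d + 1)) :
    S.dualIdem F x j ∈ S.terw F x :=
  Algebra.subset_adjoin (Or.inr ⟨j, rfl⟩)

lemma W0_sphere_const (S : AssocScheme X d) (x : X) {v : X → F} (hv : v ∈ S.W0 F x)
    {y z : X} (h : S.r x y = S.r x z) : v y = v z := by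
  induction hv using Submodule.span_induction with
  | mem w hw =>
    obtain ⟨i, rfl⟩ := hw
    show S.e F x i y = S.e F x i z
    rw [e_apply, e_apply, h]
  | zero => rfl
  | add a b _ _ ha hb => simp only [Pi.add_apply, ha, hb]
  | smul c a _ ha => simp only [Pi.smul_apply, ha]

end Aux

theorem W0_irreducible_iff_pprime_valenced (p : ℕ) [Fact p.Prime] [CharP F p]
    (S : AssocScheme X d) (x : X) :
    (S.W0 F x ≠ ⊥ ∧ ∀ U : Submodule F (X → F),
        (∀ Z ∈ S.terw F x, ∀ v ∈ U, Z *ᵥ v ∈ U) → U ≤ S.W0 F x →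
          U = ⊥ ∨ U = S.W0 F x) ↔
      ∀ i : Fin (d + 1), ¬ p ∣ S.k i := by

  have hp : p.Prime := Fact.out
  constructor
  · rintro ⟨-, hirr⟩ i hdvd
    set U : Submodule F (X → F) :=
      Submodule.span F {v | ∃ ℓ, p ∣ S.k ℓ ∧ v = S.e F x ℓ} with hUdef
    have hgen : ∀ Z ∈ (Set.range (S.adjM F) ∪ Set.range (S.dualIdem F x)),
        ∀ ℓ, p ∣ S.k ℓ → Z *ᵥ S.e F x ℓ ∈ U := by
      rintro Z (⟨j, rfl⟩ | ⟨j, rfl⟩) ℓ hℓ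
      · rw [adjM_mulVec_e_sum]
        apply Submodule.sum_mem
        intro m _
        by_cases hm : p ∣ S.k m
        · exact Submodule.smul_mem _ _ (Submodule.subset_span ⟨m, hm, rfl⟩)
        · have ht := S.triple ℓ (S.inv j) m
          have h2 : p ∣ S.k m * S.p ℓ (S.inv j) m := by
            rw [ht]; exact hℓ.mul_right _
          have h3 : p ∣ S.p ℓ (S.inv j) m := ((hp.dvd_mul).mp h2).resolve_left hm
          rw [(CharP.cast_eq_zero_iff F p _).mpr h3, zero_smul]
          exact Submodule.zero_mem _
      · rw [dualIdem_mulVec_e]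
        by_cases h : j = ℓ
        · rw [if_pos h]; exact Submodule.subset_span ⟨ℓ, hℓ, rfl⟩
        · rw [if_neg h]; exact Submodule.zero_mem _
    have hinv : ∀ Z ∈ S.terw F x, ∀ v ∈ U, Z *ᵥ v ∈ U := by
      intro Z hZ
      induction hZ using Algebra.adjoin_induction with
      | mem Z hZ =>
        intro v hv
        induction hv using Submodule.span_induction with
        | mem w hw => obtain ⟨ℓ, hℓ, rfl⟩ := hw; exact hgen Z hZ ℓ hℓ
        | zero => rw [Matrix.mulVec_zero]; exact Submodule.zero_mem _
        | add a b _ _ ha hb => rw [Matrix.mulVec_add]; exact Submodule.add_mem _ ha hb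
        | smul c a _ ha => rw [Matrix.mulVec_smul]; exact Submodule.smul_mem _ _ ha
      | algebraMap c =>
        intro v hv
        rw [Algebra.algebraMap_eq_smul_one, Matrix.smul_mulVec, Matrix.one_mulVec]
        exact Submodule.smul_mem _ _ hv
      | add a b _ _ ha hb =>
        intro v hv
        rw [Matrix.add_mulVec]; exact Submodule.add_mem _ (ha v hv) (hb v hv)
      | mul a b _ _ ha hb =>
        intro v hv
        rw [← Matrix.mulVec_mulVec]; exact ha _ (hb v hv)
    have hle : U ≤ S.W0 F x := by
      rw [hUdef]
      apply Submodule.span_le.mpr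
      rintro v ⟨ℓ, -, rfl⟩
      exact S.e_mem_W0 x ℓ
    rcases hirr U hinv hle with hbot | htop
    · have : S.e F x i ∈ U := Submodule.subset_span ⟨i, hdvd, rfl⟩
      rw [hbot, Submodule.mem_bot] at this
      exact S.e_ne_zero x i this
    · have hzero : ∀ v ∈ U, v x = 0 := by
        intro v hv
        induction hv using Submodule.span_induction with
        | mem w hw =>
          obtain ⟨ℓ, hℓ, rfl⟩ := hw
          have hℓ0 : ℓ ≠ 0 := by
            intro h; rw [h, S.k_zero] at hℓ
            exact hp.ne_one (Nat.dvd_one.mp hℓ)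
          rw [e_apply, r_self, if_neg (fun h => hℓ0 h.symm)]
        | zero => rfl
        | add a b _ _ ha hb => simp [ha, hb]
        | smul c a _ ha => simp [ha]
      have h0 : S.e F x 0 ∈ U := by rw [htop]; exact S.e_mem_W0 x 0
      have := hzero _ h0
      rw [e_apply, r_self, if_pos rfl] at this
      exact one_ne_zero this
  · intro hk
    constructor
    · intro hbot
      have h0 : S.e F x 0 ∈ S.W0 F x := S.e_mem_W0 x 0
      rw [hbot, Submodule.mem_bot] at h0
      exact S.e_ne_zero x 0 h0
    · intro U hinvU hle
      by_cases hb : U = ⊥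
      · exact Or.inl hb
      right
      obtain ⟨v, hvU, hv0⟩ := (Submodule.ne_bot_iff U).mp hb
      obtain ⟨y, hvy⟩ : ∃ y, v y ≠ 0 := Function.ne_iff.mp hv0
      set i := S.r x y with hi
      have h1 : S.dualIdem F x i *ᵥ v ∈ U := hinvU _ (S.dualIdem_mem_terw x i) v hvU
      have h2 : S.dualIdem F x i *ᵥ v = v y • S.e F x i := by
        rw [dualIdem_mulVec]
        funext z
        by_cases hz : S.r x z = i
        · rw [if_pos hz]
          simp only [Pi.smul_apply, e_apply, if_pos hz, smul_eq_mul, mul_one]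
          exact (S.W0_sphere_const x (hle hvU) (show S.r x y = S.r x z from hz.symm)).symm
        · rw [if_neg hz]
          simp [e_apply, hz]
      have h3 : S.e F x i ∈ U := by
        have := U.smul_mem (v y)⁻¹ (h2 ▸ h1)
        rwa [inv_smul_smul₀ hvy] at this
      have hall : ∀ ℓ, S.e F x ℓ ∈ U := by
        intro ℓ
        obtain ⟨j, hj⟩ : ∃ j, ¬ p ∣ S.p i (S.inv j) ℓ := by
          by_contra hcon
          push_neg at hcon
          exact hk i (S.sum_p i ℓ ▸ Finset.dvd_sum fun j _ => hcon j)
        have h4 : S.dualIdem F x ℓ *ᵥ (S.adjM F j *ᵥ S.e F x i) ∈ U :=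
          hinvU _ (S.dualIdem_mem_terw x ℓ) _ (hinvU _ (S.adjM_mem_terw x j) _ h3)
        have h5 : S.dualIdem F x ℓ *ᵥ (S.adjM F j *ᵥ S.e F x i)
            = ((S.p i (S.inv j) ℓ : ℕ) : F) • S.e F x ℓ := by
          rw [adjM_mulVec_e, dualIdem_mulVec]
          funext z
          by_cases hz : S.r x z = ℓ
          · simp [hz, e_apply]
          · simp [hz, e_apply]
        rw [h5] at h4
        have hc : ((S.p i (S.inv j) ℓ : ℕ) : F) ≠ 0 :=
          fun h => hj ((CharP.cast_eq_zero_iff F p _).mp h)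
        have := U.smul_mem (((S.p i (S.inv j) ℓ : ℕ) : F))⁻¹ h4
        rwa [inv_smul_smul₀ hc] at this
      refine le_antisymm hle ?_
      apply Submodule.span_le.mpr
      rintro w ⟨ℓ, rfl⟩
      exact hall ℓ

end AssocScheme
end

section
/- For each ℓ ∈ [0,d], the T-module M_ℓ = span_F{E_i^* J E_ℓ^* : i ∈ [0,d]} (under left multiplication) is isomorphic to the primary module W_0 = span_F{E_i^* 𝟏 : i ∈ [0,d]}; the map sending E_i^* 𝟏 to E_i^* J E_ℓ^* is a T-isomorphism. Consequently B_0, as a left T-module, is a direct sum of d+1 copies of W_0. -/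
open Matrix

namespace AssocScheme

variable {X : Type*} [Fintype X] [DecidableEq X] {d : ℕ}

variable (F : Type*) [Field F]

/-- `B_0 = span_F {E_i^* J E_j^* : i,j ∈ [0,d]}`. -/
def B0 (S : AssocScheme X d) (x : X) : Submodule F (Matrix X X F) :=
  Submodule.span F (Set.range fun q : Fin (d + 1) × Fin (d + 1) =>
    S.dualIdem F x q.1 * Jmat F * S.dualIdem F x q.2)

/-- `B_1 = span_F {E_i^* J E_j^* : p ∣ k_i k_j}`. -/
def B1 (p : ℕ) (S : AssocScheme X d) (x : X) : Submodule F (Matrix X X F) :=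
  Submodule.span F {Z : Matrix X X F | ∃ i j : Fin (d + 1),
    p ∣ S.k i * S.k j ∧ Z = S.dualIdem F x i * Jmat F * S.dualIdem F x j}

/-- `M_ℓ = span_F {E_i^* J E_ℓ^* : i ∈ [0,d]}`. -/
def Msub (S : AssocScheme X d) (x : X) (t : Fin (d + 1)) : Submodule F (Matrix X X F) :=
  Submodule.span F (Set.range fun i : Fin (d + 1) =>
    S.dualIdem F x i * Jmat F * S.dualIdem F x t)


lemma dualIdem_mulVec_one (S : AssocScheme X d) (x : X) (i : Fin (d + 1)) :
    (S.dualIdem F x i *ᵥ (1 : X → F)) = fun y => if S.r x y = i then 1 else 0 := by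
  funext y
  simp [dualIdem, mulVec, dotProduct, ite_and, Finset.sum_ite_eq]

lemma dualIdem_mul_dualIdem (S : AssocScheme X d) (x : X) (a b : Fin (d + 1)) :
    S.dualIdem F x a * S.dualIdem F x b
      = if a = b then S.dualIdem F x a else 0 := by
  ext y z
  simp only [dualIdem, Matrix.mul_apply, Matrix.of_apply, ite_and, ite_mul, one_mul, zero_mul,
    Finset.sum_ite_eq, Finset.mem_univ, if_true]
  by_cases hyz : y = z <;> split_ifs <;> simp_all

lemma triple_eq (S : AssocScheme X d) (x : X) (i t : Fin (d + 1)) :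
    S.dualIdem F x i * Jmat F * S.dualIdem F x t
      = Matrix.of fun y z => if S.r x y = i ∧ S.r x z = t then 1 else 0 := by
  ext y z
  simp only [dualIdem, Jmat, Matrix.mul_apply, Matrix.of_apply, ite_and, ite_mul, mul_ite, one_mul,
    mul_one, zero_mul, mul_zero, Finset.sum_ite_eq, Finset.sum_ite_eq', Finset.mem_univ, if_true]
  split_ifs <;> simp_all

lemma exists_rel (S : AssocScheme X d) (x : X) (t : Fin (d + 1)) :
    ∃ z : X, S.r x z = t := by
  obtain ⟨a, b, hab⟩ := S.surj t
  have h1 := S.card_p t (S.inv t) a a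
  have h2 := S.card_p t (S.inv t) x x
  rw [(S.r_diag a a).2 rfl] at h1
  rw [(S.r_diag x x).2 rfl] at h2
  have hb : b ∈ Finset.univ.filter fun z : X => S.r a z = t ∧ S.r z a = S.inv t := by
    simp [hab, S.r_symm a b]
  have hpos : 0 < S.p t (S.inv t) 0 := by
    rw [← h1]
    exact Finset.card_pos.2 ⟨b, hb⟩
  have hne : (Finset.univ.filter fun z : X => S.r x z = t ∧ S.r z x = S.inv t).Nonempty := by
    rw [← Finset.card_pos, h2]
    exact hpos
  obtain ⟨z, hz⟩ := hne
  simp only [Finset.mem_filter] at hz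
  exact ⟨z, hz.2.1⟩

/-- The candidate isomorphism, globally defined. -/
def phiMap (S : AssocScheme X d) (x : X) (ℓ : Fin (d + 1)) :
    (X → F) →ₗ[F] Matrix X X F where
  toFun v := Matrix.of fun y z => v y * (if S.r x z = ℓ then 1 else 0)
  map_add' u v := by
    ext y z
    simp only [Matrix.of_apply, Pi.add_apply, Matrix.add_apply]
    exact add_mul _ _ _
  map_smul' c v := by
    ext y z
    simp only [Matrix.of_apply, Pi.smul_apply, Matrix.smul_apply, smul_eq_mul, RingHom.id_apply]
    exact mul_assoc _ _ _

theorem Msub_iso_W0_and_B0_direct_sum (p : ℕ) [Fact p.Prime] [CharP F p]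
    (S : AssocScheme X d) (x : X) (ℓ : Fin (d + 1)) :
    (∃ φ : (X → F) →ₗ[F] Matrix X X F,
      (∀ i : Fin (d + 1), φ (S.dualIdem F x i *ᵥ (1 : X → F)) =
          S.dualIdem F x i * Jmat F * S.dualIdem F x ℓ) ∧
      Set.InjOn φ (S.W0 F x : Set (X → F)) ∧
      φ '' (S.W0 F x : Set (X → F)) = (Msub F S x ℓ : Set (Matrix X X F)) ∧
      (∀ Z ∈ S.terw F x, ∀ v ∈ S.W0 F x, φ (Z *ᵥ v) = Z * φ v)) ∧
    B0 F S x = (⨆ t : Fin (d + 1), Msub F S x t) ∧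
    iSupIndep fun t : Fin (d + 1) => Msub F S x t := by
  classical
  set φ := phiMap F S x ℓ with hφ
  have hgen : ∀ i : Fin (d + 1), φ (S.dualIdem F x i *ᵥ (1 : X → F)) =
      S.dualIdem F x i * Jmat F * S.dualIdem F x ℓ := by
    intro i
    ext y z
    simp only [hφ, phiMap, LinearMap.coe_mk, AddHom.coe_mk, dualIdem_mulVec_one, triple_eq,
      Matrix.of_apply, ite_and, ite_mul, mul_ite, one_mul, mul_one, zero_mul, mul_zero]
    split_ifs <;> simp_all
  constructor
  · refine ⟨φ, hgen, ?_, ?_, ?_⟩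
    · -- injectivity
      obtain ⟨z0, hz0⟩ := exists_rel S x ℓ
      intro u _ v _ h
      funext y
      have h2 : (φ u) y z0 = (φ v) y z0 := by rw [h]
      simpa [hφ, phiMap, hz0] using h2
    · -- image
      have hmap : Submodule.map φ (S.W0 F x) = Msub F S x ℓ := by
        rw [W0, Msub, Submodule.map_span]
        congr 1
        ext M
        simp only [Set.mem_image, Set.mem_range]
        constructor
        · rintro ⟨v, ⟨i, rfl⟩, rfl⟩
          exact ⟨i, (hgen i).symm⟩
        · rintro ⟨i, rfl⟩
          exact ⟨_, ⟨i, rfl⟩, hgen i⟩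
      rw [← hmap, Submodule.map_coe]
    · -- intertwining (holds for all matrices)
      intro Z _ v _
      ext y z
      simp [hφ, phiMap, Matrix.mul_apply, mulVec, dotProduct, Finset.sum_mul, mul_assoc]
  constructor
  · -- B0 = ⨆ Msub
    apply le_antisymm
    · rw [B0]
      apply Submodule.span_le.2
      rintro _ ⟨⟨i, t⟩, rfl⟩
      exact Submodule.mem_iSup_of_mem t (Submodule.subset_span ⟨i, rfl⟩)
    · refine iSup_le fun t => Submodule.span_le.2 ?_
      rintro _ ⟨i, rfl⟩
      exact Submodule.subset_span ⟨(i, t), rfl⟩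
  · -- independence
    intro t
    rw [Submodule.disjoint_def]
    intro M hMt hMrest
    have h1 : ∀ N ∈ Msub F S x t, N * S.dualIdem F x t = N := by
      intro N hN
      induction hN using Submodule.span_induction with
      | mem M hM =>
        obtain ⟨i, rfl⟩ := hM
        rw [mul_assoc, dualIdem_mul_dualIdem, if_pos rfl]
      | zero => simp
      | add M N _ _ hM hN => rw [add_mul, hM, hN]
      | smul c M _ hM => rw [smul_mul_assoc, hM]
    have hker : (⨆ s, ⨆ _ : s ≠ t, Msub F S x s) ≤
        LinearMap.ker (LinearMap.mulRight F (S.dualIdem F x t)) := by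
      refine iSup_le fun s => iSup_le fun hs => Submodule.span_le.2 ?_
      rintro _ ⟨i, rfl⟩
      simp only [SetLike.mem_coe, LinearMap.mem_ker, LinearMap.mulRight_apply]
      rw [mul_assoc, dualIdem_mul_dualIdem, if_neg hs, mul_zero]
    have h2 : M * S.dualIdem F x t = 0 := by
      have := hker hMrest
      simpa using this
    rw [← h1 M hMt, h2]


end AssocScheme
end
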